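/- Rivin's functional is convex: the function F(u₁,u₂,u₃) obtained by integrating the closed 1-form Σᵢ a_i du_i (where u_i = ln l_i and a_i is the angle opposite side l_i of a Euclidean triangle) has positive semidefinite Hessian at every point of its domain. -/

import Mathlib

/-!
Differentiating the law of cosines in the coordinates `u_k = log l_k` gives
`∂a_i/∂u_j = -(l_i² + l_j² - l_k²) / (4A)` for `j ≠ i` (with `k` the third index) and
`∂a_i/∂u_i = 2 l_i² / (4A)`, where `A` is the area of the triangle. The rows of this matrix sum
to zero, so its quadratic form is `(1/(4A)) ∑_{i<j} (l_i² + l_j² - l_k²) (v_i - v_j)²`. As a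
binary quadratic form in two of the differences `v_i - v_j` (the third is minus their sum) it
has positive leading coefficient `2 l_j²` and discriminant `-64 A²`, hence it is nonnegative.
-/

open Real

/-- The angle `a_i` of the Euclidean triangle with side lengths `l_i = exp (u i)`,
as a function of `u ∈ ℝ³` (Rivin's coordinates). -/
noncomputable def rivinAngle (i : Fin 3) (u : EuclideanSpace ℝ (Fin 3)) : ℝ :=
  Real.arccos ((Real.exp (u (i + 1)) ^ 2 + Real.exp (u (i + 2)) ^ 2 - Real.exp (u i) ^ 2) /
    (2 * Real.exp (u (i + 1)) * Real.exp (u (i + 2))))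

/-- `16 · area²` of a triangle with sides `a b c`, by Heron's formula. -/
def heron (a b c : ℝ) : ℝ := (a + b + c) * (-a + b + c) * (a - b + c) * (a + b - c)

section Triangle

variable {a b c : ℝ}

theorem heron_rotate (a b c : ℝ) : heron b c a = heron a b c := by
  unfold heron; ring

theorem heron_pos (hab : a < b + c) (hbc : b < c + a) (hca : c < a + b) :
    0 < heron a b c := by
  have hsum : 0 < a + b + c := by linarith
  unfold heron
  exact mul_pos (mul_pos (mul_pos hsum (by linarith)) (by linarith)) (by linarith)

theorem one_sub_sq_lawOfCosines (hb : b ≠ 0) (hc : c ≠ 0) :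
    1 - ((b ^ 2 + c ^ 2 - a ^ 2) / (2 * b * c)) ^ 2 = heron a b c / (2 * b * c) ^ 2 := by
  unfold heron; field_simp; ring

theorem abs_lawOfCosines_lt_one (hab : a < b + c) (hbc : b < c + a) (hca : c < a + b) :
    |(b ^ 2 + c ^ 2 - a ^ 2) / (2 * b * c)| < 1 := by
  have hb : 0 < b := by linarith
  have hc : 0 < c := by linarith
  rw [← sq_lt_one_iff_abs_lt_one, ← sub_pos, one_sub_sq_lawOfCosines (a := a) hb.ne' hc.ne']
  exact div_pos (heron_pos hab hbc hca) (by positivity)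

theorem triangle_quadratic_form_nonneg (hb : b ≠ 0) (h : 0 ≤ heron a b c) (x y z : ℝ) :
    0 ≤ (a ^ 2 + b ^ 2 - c ^ 2) * (x - y) ^ 2 + (b ^ 2 + c ^ 2 - a ^ 2) * (y - z) ^ 2
      + (c ^ 2 + a ^ 2 - b ^ 2) * (z - x) ^ 2 := by
  refine nonneg_of_mul_nonneg_right (a := 2 * b ^ 2) ?_ (by positivity)
  have hsq : 2 * b ^ 2 * ((a ^ 2 + b ^ 2 - c ^ 2) * (x - y) ^ 2
      + (b ^ 2 + c ^ 2 - a ^ 2) * (y - z) ^ 2 + (c ^ 2 + a ^ 2 - b ^ 2) * (z - x) ^ 2)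
      = (2 * b ^ 2 * (x - y) + (b ^ 2 + c ^ 2 - a ^ 2) * (z - x)) ^ 2
        + heron a b c * (z - x) ^ 2 := by
    unfold heron; ring
  rw [hsq]
  positivity

end Triangle

theorem sum_mul_apply_single {𝕜 ι : Type*} [RCLike 𝕜] [Fintype ι] [DecidableEq ι]
    (L : EuclideanSpace 𝕜 ι →L[𝕜] 𝕜) (v : ι → 𝕜) :
    ∑ j, v j * L (EuclideanSpace.single j 1) = L (WithLp.toLp 2 v) := by
  conv_rhs => rw [← (EuclideanSpace.basisFun ι 𝕜).sum_repr (WithLp.toLp 2 v)]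
  simp only [EuclideanSpace.basisFun_repr, EuclideanSpace.basisFun_apply, map_sum, map_smul,
    smul_eq_mul]

theorem fderiv_rivinAngle_apply {u : EuclideanSpace ℝ (Fin 3)} {i : Fin 3}
    (hab : exp (u i) < exp (u (i + 1)) + exp (u (i + 2)))
    (hbc : exp (u (i + 1)) < exp (u (i + 2)) + exp (u i))
    (hca : exp (u (i + 2)) < exp (u i) + exp (u (i + 1))) (w : EuclideanSpace ℝ (Fin 3)) :
    fderiv ℝ (rivinAngle i) u w =
      ((exp (u i) ^ 2 + exp (u (i + 1)) ^ 2 - exp (u (i + 2)) ^ 2) * (w i - w (i + 1))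
        + (exp (u (i + 2)) ^ 2 + exp (u i) ^ 2 - exp (u (i + 1)) ^ 2) * (w i - w (i + 2)))
        / √(heron (exp (u i)) (exp (u (i + 1))) (exp (u (i + 2)))) := by
  have hexp (k : Fin 3) : HasFDerivAt (fun v : EuclideanSpace ℝ (Fin 3) => exp (v k))
      (exp (u k) • PiLp.proj 2 (fun _ : Fin 3 => ℝ) k) u :=
    (PiLp.hasFDerivAt_apply 2 u k).exp
  have hnum := (((hexp (i + 1)).pow 2).add ((hexp (i + 2)).pow 2)).sub ((hexp i).pow 2)
  have hden := (hasDerivAt_inv (by positivity : 2 * exp (u (i + 1)) * exp (u (i + 2)) ≠ 0)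
    ).comp_hasFDerivAt u (((hexp (i + 1)).const_mul 2).mul (hexp (i + 2)))
  have hcos := abs_lt.1 (abs_lawOfCosines_lt_one hab hbc hca)
  have hangle : HasFDerivAt (rivinAngle i) _ u :=
    (hasDerivAt_arccos hcos.1.ne' hcos.2.ne).comp_hasFDerivAt u (hnum.mul hden)
  rw [hangle.fderiv, one_sub_sq_lawOfCosines (by positivity) (by positivity),
    sqrt_div' _ (by positivity), sqrt_sq (by positivity)]
  simp only [one_div, inv_div, Pi.sub_apply, Pi.add_apply, smul_add, neg_smul, smul_neg,
    mul_inv_rev, Nat.add_one_sub_one, pow_one, nsmul_eq_mul, Nat.cast_ofNat, neg_neg, add_apply,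
    smul_apply, PiLp.proj_apply, smul_eq_mul, neg_apply, sub_apply]
  field_simp
  ring

/-- Rivin's functional is convex: the Hessian matrix `(∂a_i/∂u_j)` of any potential
`F` with `∂F/∂u_i = a_i` is positive semidefinite at every point of the domain
`{u : l_i = exp u_i satisfy the strict triangle inequalities}`. -/
theorem rivin_functional_convex (u : EuclideanSpace ℝ (Fin 3))
    (htri : ∀ i : Fin 3, Real.exp (u i) < Real.exp (u (i + 1)) + Real.exp (u (i + 2))) :
    ∀ v : Fin 3 → ℝ,
      0 ≤ ∑ i : Fin 3, ∑ j : Fin 3,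
        v i * v j * (fderiv ℝ (rivinAngle i) u (EuclideanSpace.single j 1)) := by
  intro v
  have hS : 0 < heron (exp (u 0)) (exp (u 1)) (exp (u 2)) := heron_pos (htri 0) (htri 1) (htri 2)
  have hrot := (heron_rotate (exp (u 1)) (exp (u 2)) (exp (u 0))).trans
    (heron_rotate (exp (u 0)) (exp (u 1)) (exp (u 2)))
  simp only [mul_assoc, ← Finset.mul_sum, sum_mul_apply_single, Fin.sum_univ_three,
    fderiv_rivinAngle_apply (htri 0) (htri 1) (htri 2),
    fderiv_rivinAngle_apply (htri 1) (htri 2) (htri 0),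
    fderiv_rivinAngle_apply (htri 2) (htri 0) (htri 1),
    Fin.reduceAdd, heron_rotate (exp (u 0)), hrot]
  calc 0 ≤ _ / √(heron (exp (u 0)) (exp (u 1)) (exp (u 2))) :=
        div_nonneg (triangle_quadratic_form_nonneg (exp_pos _).ne' hS.le (v 0) (v 1) (v 2))
          (sqrt_nonneg _)
    _ = _ := by ring
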